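/- Weighting representation of the generalized mediation functional (K = 1, discrete case): for discrete X, A, M, Y with positivity, Σ_{x,m} E[Y | x, a₂, m] p(m | x, a₁) p(x) = E[ 1{A = a₂} / p(a₂ | X) · p(M | X, a₁) / p(M | X, a₂) · Y ], where p denotes conditional probability mass functions. -/

import Mathlib

open Finset

variable {Ω : Type*}

/-- Probability of the event `s` under the weight function `w` on a finite sample space. -/
noncomputable def Pr [Fintype Ω] (w : Ω → ℝ) (s : Set Ω) : ℝ :=
  ∑ ω, Set.indicator s w ω

/-- Conditional probability of `s` given `t`. -/
noncomputable def cPr [Fintype Ω] (w : Ω → ℝ) (s t : Set Ω) : ℝ :=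
  Pr w (s ∩ t) / Pr w t

/-- Conditional expectation of `Y` given the event `t`. -/
noncomputable def cExp [Fintype Ω] (w : Ω → ℝ) (Y : Ω → ℝ) (t : Set Ω) : ℝ :=
  (∑ ω, Set.indicator t (fun ω' => w ω' * Y ω') ω) / Pr w t

/-!
The weight `1{A = a₂} / p(a₂ | x) · p(m | x, a₁) / p(m | x, a₂)` depends on `ω` only through
its cell `(X ω, M ω)`, and on the cell `{X = x, M = m}` it vanishes off `{A = a₂}`. By the chain
rule `p(m | x, a₂) p(a₂ | x) = P(x, a₂, m) / P(x)` it equals `p(m | x, a₁) P(x) / P(x, a₂, m)`, so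
the cell's contribution to the weighted expectation is `E[Y | x, a₂, m] p(m | x, a₁) P(x)`.
-/

lemma Finset.sum_comp_mul_eq_sum_mul_sum_indicator {ζ R : Type*} [Fintype Ω] [Fintype ζ]
    [NonUnitalNonAssocSemiring R] (Z : Ω → ζ) (g : ζ → R) (f : Ω → R) :
    ∑ ω, g (Z ω) * f ω = ∑ z, g z * ∑ ω, {ω | Z ω = z}.indicator f ω := by
  classical
  simp_rw [mul_sum, Set.indicator_apply, Set.mem_ofPred_eq, mul_ite, mul_zero]
  rw [sum_comm]
  exact sum_congr rfl fun ω _ => by simp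

section Pr

variable [Fintype Ω] {w : Ω → ℝ}

lemma Pr_nonneg (hw : ∀ ω, 0 ≤ w ω) (s : Set Ω) : 0 ≤ Pr w s :=
  sum_nonneg fun ω _ => Set.indicator_nonneg (fun ω _ => hw ω) ω

lemma Pr_mono (hw : ∀ ω, 0 ≤ w ω) {s t : Set Ω} (h : s ⊆ t) : Pr w s ≤ Pr w t :=
  sum_le_sum fun ω _ => Set.indicator_le_indicator_of_subset h hw ω

lemma Pr_eq_zero_of_subset (hw : ∀ ω, 0 ≤ w ω) {s t : Set Ω} (h : s ⊆ t) (ht : Pr w t = 0) :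
    Pr w s = 0 :=
  le_antisymm (ht ▸ Pr_mono hw h) (Pr_nonneg hw s)

lemma cPr_mul_cPr (hw : ∀ ω, 0 ≤ w ω) (s t u : Set Ω) :
    cPr w s (u ∩ t) * cPr w t u = Pr w (u ∩ (t ∩ s)) / Pr w u := by
  rw [cPr, cPr, Set.inter_comm s, Set.inter_assoc, Set.inter_comm t u]
  by_cases h : Pr w (u ∩ t) = 0
  · rw [Pr_eq_zero_of_subset hw (Set.inter_subset_inter_right u Set.inter_subset_left) h]
    simp
  · exact div_mul_div_cancel₀ h

end Pr

theorem gmf_weighting_representation_general [Fintype Ω] {χ σM : Type*} [Fintype χ] [Fintype σM]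
    (w : Ω → ℝ) (hw : ∀ ω, 0 ≤ w ω)
    (X : Ω → χ) (A : Ω → Bool) (M : Ω → σM) (Y : Ω → ℝ) (a₁ a₂ : Bool) :
    ∑ x : χ, ∑ m : σM,
        cExp w Y {ω | X ω = x ∧ A ω = a₂ ∧ M ω = m} *
          cPr w {ω | M ω = m} {ω | X ω = x ∧ A ω = a₁} * Pr w {ω | X ω = x}
      = ∑ ω, w ω * ((if A ω = a₂ then (1 : ℝ) else 0) /
            cPr w {ω' | A ω' = a₂} {ω' | X ω' = X ω} *
          (cPr w {ω' | M ω' = M ω} {ω' | X ω' = X ω ∧ A ω' = a₁} /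
            cPr w {ω' | M ω' = M ω} {ω' | X ω' = X ω ∧ A ω' = a₂}) * Y ω) := by
  set weight : χ × σM → ℝ := fun p =>
      cPr w {ω | M ω = p.2} {ω | X ω = p.1 ∧ A ω = a₁} /
        (cPr w {ω | M ω = p.2} {ω | X ω = p.1 ∧ A ω = a₂} * cPr w {ω | A ω = a₂} {ω | X ω = p.1})
    with hweight_def
  have hweight : ∀ ω, w ω * ((if A ω = a₂ then (1 : ℝ) else 0) /
        cPr w {ω' | A ω' = a₂} {ω' | X ω' = X ω} *
      (cPr w {ω' | M ω' = M ω} {ω' | X ω' = X ω ∧ A ω' = a₁} /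
        cPr w {ω' | M ω' = M ω} {ω' | X ω' = X ω ∧ A ω' = a₂}) * Y ω)
      = weight (X ω, M ω) * {ω | A ω = a₂}.indicator (fun ω' => w ω' * Y ω') ω := by
    intro ω
    simp only [hweight_def, Set.indicator_apply, Set.mem_ofPred_eq]
    split_ifs <;> ring
  rw [sum_congr rfl fun ω _ => hweight ω,
    sum_comp_mul_eq_sum_mul_sum_indicator (fun ω => (X ω, M ω)), Fintype.sum_prod_type]
  refine sum_congr rfl fun x _ => sum_congr rfl fun m _ => ?_
  have hcell : {ω | (X ω, M ω) = (x, m)} ∩ {ω | A ω = a₂} = {ω | X ω = x ∧ A ω = a₂ ∧ M ω = m} := by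
    ext ω
    simp only [Set.mem_inter_iff, Set.mem_ofPred_eq, Prod.mk.injEq]
    tauto
  have hchain := cPr_mul_cPr hw {ω | M ω = m} {ω | A ω = a₂} {ω | X ω = x}
  simp only [← Set.ofPred_and] at hchain
  rw [Set.indicator_indicator, hcell, hweight_def, cExp]
  beta_reduce
  rw [hchain, div_div_eq_mul_div]
  ring

/-- Weighting representation of the generalized mediation functional (K = 1, discrete):
`Σ_{x,m} E[Y | x, a₂, m] p(m | x, a₁) p(x)
  = E[1{A = a₂}/p(a₂|X) · p(M|X,a₁)/p(M|X,a₂) · Y]`. -/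
theorem gmf_weighting_representation [Fintype Ω] {χ σM : Type*} [Fintype χ] [Fintype σM]
    (w : Ω → ℝ) (hw : ∀ ω, 0 ≤ w ω) (hw1 : ∑ ω, w ω = 1)
    (X : Ω → χ) (A : Ω → Bool) (M : Ω → σM) (Y : Ω → ℝ) (a₁ a₂ : Bool)
    (hpos : ∀ ω, 0 < w ω → ∀ b : Bool,
      0 < cPr w {ω' | A ω' = b} {ω' | X ω' = X ω} ∧
      0 < cPr w {ω' | M ω' = M ω} {ω' | X ω' = X ω ∧ A ω' = b}) :
    ∑ x : χ, ∑ m : σM,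
        cExp w Y {ω | X ω = x ∧ A ω = a₂ ∧ M ω = m} *
          cPr w {ω | M ω = m} {ω | X ω = x ∧ A ω = a₁} * Pr w {ω | X ω = x}
      = ∑ ω, w ω * ((if A ω = a₂ then (1 : ℝ) else 0) /
            cPr w {ω' | A ω' = a₂} {ω' | X ω' = X ω} *
          (cPr w {ω' | M ω' = M ω} {ω' | X ω' = X ω ∧ A ω' = a₁} /
            cPr w {ω' | M ω' = M ω} {ω' | X ω' = X ω ∧ A ω' = a₂}) * Y ω) :=
  gmf_weighting_representation_general w hw X A M Y a₁ a₂
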